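/- Let D be a finite skeletal EI-category. For each object a let G_a = D(a,a) be its automorphism group and let E_a be a complete set of primitive orthogonal idempotents of the group algebra ℂG_a. Then: (1) the union ⋃_{a ∈ D⁰} E_a is a complete set of primitive orthogonal idempotents of the category algebra ℂD; (2) for e ∈ E_a and f ∈ E_b, the left ℂD-modules ℂD·e and ℂD·f are isomorphic if and only if a = b and ℂG_a·e ≅ ℂG_a·f as left ℂG_a-modules. -/

import Mathlib

set_option linter.unusedSectionVars false

open CategoryTheory

namespace CatAlgebra

variable (C : Type) [Category.{0} C] [Fintype C] [∀ a b : C, Fintype (a ⟶ b)]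
  [DecidableEq C] [∀ a b : C, DecidableEq (a ⟶ b)]

/-- The type of morphisms of `C`, bundled with their endpoints. -/
abbrev Mor := Σ a b : C, a ⟶ b

instance : Fintype (Mor C) := by unfold Mor; infer_instance
instance : DecidableEq (Mor C) := by unfold Mor; exact Sigma.instDecidableEqSigma

variable {C}

/-- Partial composition: `pcomp p q` is "`p` after `q`" when defined. -/
def pcomp (p q : Mor C) : Option (Mor C) :=
  if h : q.2.1 = p.1 then some ⟨q.1, p.2.1, (q.2.2 ≫ eqToHom h) ≫ p.2.2⟩ else none

lemma pcomp_assoc (p q r : Mor C) :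
    (pcomp p q).bind (fun s => pcomp s r) = (pcomp q r).bind (fun s => pcomp p s) := by
  obtain ⟨a, b, f⟩ := p
  obtain ⟨c, d, g⟩ := q
  obtain ⟨e, e', h⟩ := r
  by_cases h1 : d = a <;> by_cases h2 : e' = c <;>
    simp [pcomp, h1, h2, Category.assoc]

/-- The identity morphism at `a`, as an element of `Mor C`. -/
def idMor (a : C) : Mor C := ⟨a, a, 𝟙 a⟩

lemma idMor_injective : Function.Injective (idMor (C := C)) := by
  intro a b h
  exact congrArg Sigma.fst h

lemma pcomp_idMor_left (q : Mor C) : pcomp (idMor q.2.1) q = some q := by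
  obtain ⟨a, b, f⟩ := q
  simp [pcomp, idMor]
  exact (congrArg (f ≫ ·) (eqToHom_refl _ _)).trans (Category.comp_id f)

lemma pcomp_idMor_right (p : Mor C) : pcomp p (idMor p.1) = some p := by
  obtain ⟨a, b, f⟩ := p
  simp [pcomp, idMor]

lemma eq_of_pcomp_idMor_left {a : C} {q m : Mor C} (h : pcomp (idMor a) q = some m) :
    q = m ∧ a = q.2.1 := by
  obtain ⟨c, d, g⟩ := q
  by_cases h1 : d = a
  · subst h1
    simp [pcomp, idMor] at h
    subst h
    exact ⟨congrArg (fun k => (⟨c, d, k⟩ : Mor C))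
      ((congrArg (g ≫ ·) (eqToHom_refl _ _)).trans (Category.comp_id g)).symm, rfl⟩
  · simp [pcomp, idMor, h1] at h

lemma eq_of_pcomp_idMor_right {a : C} {p m : Mor C} (h : pcomp p (idMor a) = some m) :
    p = m ∧ a = p.1 := by
  obtain ⟨c, d, g⟩ := p
  by_cases h1 : a = c
  · subst h1
    simp [pcomp, idMor] at h
    subst h
    exact ⟨rfl, rfl⟩
  · simp [pcomp, idMor, h1] at h

variable (C)

/-- The complex category algebra of a finite category `C`: the vector space of
`ℂ`-valued functions on the set of morphisms of `C`, with convolution product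
(`m' ⋅ m` is the composite when defined and `0` otherwise). -/
def CatAlg : Type := Mor C → ℂ

noncomputable instance : AddCommGroup (CatAlg C) := by unfold CatAlg; infer_instance
noncomputable instance : Module ℂ (CatAlg C) := by unfold CatAlg; infer_instance

variable {C}

noncomputable instance : Mul (CatAlg C) :=
  ⟨fun x y m => ∑ p : Mor C, ∑ q : Mor C, if pcomp p q = some m then x p * y q else 0⟩

lemma mul_def (x y : CatAlg C) (m : Mor C) :
    (x * y) m = ∑ p : Mor C, ∑ q : Mor C, if pcomp p q = some m then x p * y q else 0 := rfl

noncomputable instance : One (CatAlg C) :=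
  ⟨fun m => ∑ a : C, if m = idMor a then 1 else 0⟩

lemma one_def (m : Mor C) : (1 : CatAlg C) m = ∑ a : C, if m = idMor a then 1 else 0 := rfl

lemma one_apply_idMor (a : C) : (1 : CatAlg C) (idMor a) = 1 := by
  rw [one_def, Finset.sum_eq_single a]
  · simp
  · intro b _ hb
    rw [if_neg fun h => hb (idMor_injective h).symm]
  · simp

private lemma sum_option_eq (m : Mor C) (o : Option (Mor C)) (g : Mor C → Option (Mor C))
    (T : ℂ) :
    (∑ s : Mor C, if o = some s ∧ g s = some m then T else 0) =
      if o.bind g = some m then T else 0 := by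
  cases o with
  | none => simp
  | some s₀ =>
    rw [Finset.sum_eq_single s₀]
    · simp
    · intro b _ hb
      simp only [Option.some_inj]
      rw [if_neg]
      rintro ⟨h1, -⟩
      exact hb h1.symm
    · simp

private lemma swap4 (F : Mor C → Mor C → Mor C → Mor C → ℂ) :
    (∑ s : Mor C, ∑ r : Mor C, ∑ p : Mor C, ∑ q : Mor C, F s r p q) =
      ∑ p : Mor C, ∑ q : Mor C, ∑ r : Mor C, ∑ s : Mor C, F s r p q :=
  calc (∑ s : Mor C, ∑ r : Mor C, ∑ p : Mor C, ∑ q : Mor C, F s r p q)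
      = ∑ r : Mor C, ∑ s : Mor C, ∑ p : Mor C, ∑ q : Mor C, F s r p q := Finset.sum_comm
    _ = ∑ r : Mor C, ∑ p : Mor C, ∑ s : Mor C, ∑ q : Mor C, F s r p q :=
        Finset.sum_congr rfl fun r _ => Finset.sum_comm
    _ = ∑ r : Mor C, ∑ p : Mor C, ∑ q : Mor C, ∑ s : Mor C, F s r p q :=
        Finset.sum_congr rfl fun r _ => Finset.sum_congr rfl fun p _ => Finset.sum_comm
    _ = ∑ p : Mor C, ∑ r : Mor C, ∑ q : Mor C, ∑ s : Mor C, F s r p q := Finset.sum_comm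
    _ = ∑ p : Mor C, ∑ q : Mor C, ∑ r : Mor C, ∑ s : Mor C, F s r p q :=
        Finset.sum_congr rfl fun p _ => Finset.sum_comm

private lemma swap3 (F : Mor C → Mor C → Mor C → ℂ) :
    (∑ s : Mor C, ∑ q : Mor C, ∑ r : Mor C, F s q r) =
      ∑ q : Mor C, ∑ r : Mor C, ∑ s : Mor C, F s q r :=
  calc (∑ s : Mor C, ∑ q : Mor C, ∑ r : Mor C, F s q r)
      = ∑ q : Mor C, ∑ s : Mor C, ∑ r : Mor C, F s q r := Finset.sum_comm
    _ = ∑ q : Mor C, ∑ r : Mor C, ∑ s : Mor C, F s q r :=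
        Finset.sum_congr rfl fun q _ => Finset.sum_comm

private lemma mul_assoc' (x y z : CatAlg C) : x * y * z = x * (y * z) := by
  funext m
  rw [mul_def, mul_def]
  have lhs : (∑ s : Mor C, ∑ r : Mor C, if pcomp s r = some m then (x * y) s * z r else 0)
      = ∑ p : Mor C, ∑ q : Mor C, ∑ r : Mor C,
          if (pcomp p q).bind (fun s => pcomp s r) = some m then x p * y q * z r else 0 := by
    have step : ∀ s r : Mor C, (if pcomp s r = some m then (x * y) s * z r else 0)
        = ∑ p : Mor C, ∑ q : Mor C,
            if pcomp p q = some s ∧ pcomp s r = some m then x p * y q * z r else 0 := by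
      intro s r
      by_cases hsr : pcomp s r = some m
      · simp only [hsr, if_pos, and_true, mul_def, Finset.sum_mul, ite_mul, zero_mul]
      · simp [hsr]
    simp only [step]
    rw [swap4]
    refine Finset.sum_congr rfl fun p _ => Finset.sum_congr rfl fun q _ =>
      Finset.sum_congr rfl fun r _ => ?_
    exact sum_option_eq m (pcomp p q) (fun s => pcomp s r) _
  have rhs : (∑ p : Mor C, ∑ s : Mor C, if pcomp p s = some m then x p * (y * z) s else 0)
      = ∑ p : Mor C, ∑ q : Mor C, ∑ r : Mor C,
          if (pcomp q r).bind (fun s => pcomp p s) = some m then x p * (y q * z r) else 0 := by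
    have step : ∀ p s : Mor C, (if pcomp p s = some m then x p * (y * z) s else 0)
        = ∑ q : Mor C, ∑ r : Mor C,
            if pcomp q r = some s ∧ pcomp p s = some m then x p * (y q * z r) else 0 := by
      intro p s
      by_cases hps : pcomp p s = some m
      · simp only [hps, if_pos, and_true, mul_def, Finset.mul_sum, mul_ite, mul_zero]
      · simp [hps]
    simp only [step]
    refine Finset.sum_congr rfl fun p _ => ?_
    rw [swap3]
    refine Finset.sum_congr rfl fun q _ => Finset.sum_congr rfl fun r _ => ?_
    exact sum_option_eq m (pcomp q r) (fun s => pcomp p s) _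
  rw [lhs, rhs]
  refine Finset.sum_congr rfl fun p _ => Finset.sum_congr rfl fun q _ =>
    Finset.sum_congr rfl fun r _ => ?_
  rw [pcomp_assoc, mul_assoc]

private lemma one_mul' (x : CatAlg C) : 1 * x = x := by
  funext m
  rw [mul_def, Finset.sum_eq_single (idMor m.2.1)]
  · rw [Finset.sum_eq_single m]
    · rw [if_pos (pcomp_idMor_left m), one_apply_idMor, one_mul]
    · intro q _ hq
      rw [if_neg fun h => hq (eq_of_pcomp_idMor_left h).1]
    · simp
  · intro p _ hp
    refine Finset.sum_eq_zero fun q _ => ?_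
    split_ifs with h
    · have h1 : (1 : CatAlg C) p = 0 := by
        rw [one_def]
        refine Finset.sum_eq_zero fun a _ => ?_
        rw [if_neg]
        intro hpa
        subst hpa
        obtain ⟨hq, ha⟩ := eq_of_pcomp_idMor_left h
        exact hp (by rw [ha, hq])
      rw [h1, zero_mul]
    · rfl
  · simp

private lemma mul_one' (x : CatAlg C) : x * 1 = x := by
  funext m
  rw [mul_def, Finset.sum_eq_single m]
  · rw [Finset.sum_eq_single (idMor m.1)]
    · rw [if_pos (pcomp_idMor_right m), one_apply_idMor, mul_one]
    · intro q _ hq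
      split_ifs with h
      · have h1 : (1 : CatAlg C) q = 0 := by
          rw [one_def]
          refine Finset.sum_eq_zero fun a _ => ?_
          rw [if_neg]
          intro hqa
          subst hqa
          obtain ⟨hm, ha⟩ := eq_of_pcomp_idMor_right h
          exact hq (by rw [ha, hm])
        rw [h1, mul_zero]
      · rfl
    · simp
  · intro p _ hp
    refine Finset.sum_eq_zero fun q _ => ?_
    split_ifs with h
    · have h1 : (1 : CatAlg C) q ≠ 0 → q = idMor q.1 := by
        intro hne
        rw [one_def] at hne
        by_contra hq
        refine hne (Finset.sum_eq_zero fun a _ => ?_)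
        rw [if_neg]
        intro hqa
        apply hq
        rw [hqa]
        rfl
      by_cases hz : (1 : CatAlg C) q = 0
      · rw [hz, mul_zero]
      · exfalso
        have hqi := h1 hz
        rw [hqi] at h
        exact hp (eq_of_pcomp_idMor_right h).1
    · rfl
  · simp

private lemma left_distrib' (x y z : CatAlg C) : x * (y + z) = x * y + x * z := by
  funext m
  show (x * (y + z)) m = (x * y) m + (x * z) m
  rw [mul_def, mul_def, mul_def, ← Finset.sum_add_distrib]
  refine Finset.sum_congr rfl fun p _ => ?_
  rw [← Finset.sum_add_distrib]
  refine Finset.sum_congr rfl fun q _ => ?_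
  have : (y + z) q = y q + z q := rfl
  split_ifs with h <;> simp [this, mul_add]

private lemma right_distrib' (x y z : CatAlg C) : (x + y) * z = x * z + y * z := by
  funext m
  show ((x + y) * z) m = (x * z) m + (y * z) m
  rw [mul_def, mul_def, mul_def, ← Finset.sum_add_distrib]
  refine Finset.sum_congr rfl fun p _ => ?_
  rw [← Finset.sum_add_distrib]
  refine Finset.sum_congr rfl fun q _ => ?_
  have : (x + y) p = x p + y p := rfl
  split_ifs with h <;> simp [this, add_mul]

private lemma zero_mul' (x : CatAlg C) : 0 * x = 0 := by
  funext m
  show (0 * x) m = 0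
  rw [mul_def]
  refine Finset.sum_eq_zero fun p _ => Finset.sum_eq_zero fun q _ => ?_
  have : (0 : CatAlg C) p = 0 := rfl
  split_ifs <;> simp [this]

private lemma mul_zero' (x : CatAlg C) : x * 0 = 0 := by
  funext m
  show (x * 0) m = 0
  rw [mul_def]
  refine Finset.sum_eq_zero fun p _ => Finset.sum_eq_zero fun q _ => ?_
  have : (0 : CatAlg C) q = 0 := rfl
  split_ifs <;> simp [this]

noncomputable instance : Ring (CatAlg C) where
  __ := (inferInstance : AddCommGroup (CatAlg C))
  mul := (· * ·)
  one := 1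
  mul_assoc := mul_assoc'
  one_mul := one_mul'
  mul_one := mul_one'
  left_distrib := left_distrib'
  right_distrib := right_distrib'
  zero_mul := zero_mul'
  mul_zero := mul_zero'

noncomputable instance : Algebra ℂ (CatAlg C) :=
  Algebra.ofModule
    (fun r x y => by
      funext m
      show ((r • x) * y) m = r • ((x * y) m)
      rw [mul_def, mul_def, Finset.smul_sum]
      refine Finset.sum_congr rfl fun p _ => ?_
      rw [Finset.smul_sum]
      refine Finset.sum_congr rfl fun q _ => ?_
      have : (r • x) p = r • x p := rfl
      split_ifs <;> simp [this, smul_mul_assoc, mul_assoc])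
    (fun r x y => by
      funext m
      show (x * (r • y)) m = r • ((x * y) m)
      rw [mul_def, mul_def, Finset.smul_sum]
      refine Finset.sum_congr rfl fun p _ => ?_
      rw [Finset.smul_sum]
      refine Finset.sum_congr rfl fun q _ => ?_
      have : (r • y) q = r • y q := rfl
      split_ifs <;> simp [this, mul_smul_comm, mul_left_comm])

end CatAlgebra

open CategoryTheory CatAlgebra

section Idempotents

variable {A : Type*} [Ring A]

/-- A primitive idempotent: a nonzero idempotent which is not the sum of two nonzero
orthogonal idempotents. -/
def IsPrimitiveIdempotent (e : A) : Prop :=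
  IsIdempotentElem e ∧ e ≠ 0 ∧
    ∀ f g : A, IsIdempotentElem f → IsIdempotentElem g → f * g = 0 → g * f = 0 →
      e = f + g → f = 0 ∨ g = 0

/-- A complete set of primitive orthogonal idempotents of `A`. -/
def IsCompleteOrthogonalPrimitiveSet (S : Finset A) : Prop :=
  (∀ e ∈ S, IsPrimitiveIdempotent e) ∧
    (∀ e ∈ S, ∀ f ∈ S, e ≠ f → e * f = 0 ∧ f * e = 0) ∧ (∑ e ∈ S, e) = 1

end Idempotents

variable {D : Type} [Category.{0} D] [Fintype D] [∀ a b : D, Fintype (a ⟶ b)]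
  [DecidableEq D] [∀ a b : D, DecidableEq (a ⟶ b)]

/-- The basis element of the category algebra corresponding to a single morphism. -/
noncomputable def delta (m₀ : Mor D) : CatAlg D := fun m => if m = m₀ then 1 else 0

/-- The canonical embedding of the group algebra `ℂ D(a,a)` of the endomorphism
group of an object `a` into the category algebra of `D`. -/
noncomputable def endEmbed (a : D) (x : MonoidAlgebra ℂ (CategoryTheory.End a)) : CatAlg D :=
  letI : Fintype (CategoryTheory.End a) := inferInstanceAs (Fintype (a ⟶ a))
  ∑ g : CategoryTheory.End a, x.coeff g • delta (⟨a, a, g⟩ : Mor D)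

/-- The union `⋃ₐ Eₐ` of the given complete sets of primitive orthogonal idempotents of
the group algebras of the endomorphism groups, viewed inside the category algebra. -/
noncomputable def unionIdem (E : ∀ a : D, Finset (MonoidAlgebra ℂ (CategoryTheory.End a))) :
    Finset (CatAlg D) :=
  letI : DecidableEq (CatAlg D) := Classical.decEq _
  Finset.univ.biUnion (fun a => (E a).image (endEmbed a))

/-!
The embedding `ι_a : ℂ D(a,a) → ℂD` is a non-unital ring homomorphism whose image consists
exactly of the elements supported on endomorphisms of `a`; in particular it contains every
corner `ι_a(e) · ℂD · ι_a(f)`. So a decomposition of `ι_a(e)` into orthogonal idempotents comes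
from one of `e`, which transfers primitivity, while embeddings at different objects multiply to
zero and `∑ₐ ι_a(1) = 1`.

For idempotents, `Ae ≅ Af` iff there are `u ∈ eAf` and `v ∈ fAe` with `uv = e` and `vu = f`.
For `ι_a(e)` and `ι_b(f)` such `u` and `v` are nonzero combinations of morphisms `b ⟶ a` and
`a ⟶ b`, which in a skeletal EI-category forces `a = b`; then `u` and `v` lie in the image of
`ι_a` and pull back to `ℂ D(a,a)`.
-/

section RingIdempotents

variable {A B : Type*} [Ring A] [Ring B]

structure IsIdempotentEquivalence (e f u v : A) : Prop where
  e_mul_u : e * u = u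
  u_mul_f : u * f = u
  f_mul_v : f * v = v
  v_mul_e : v * e = v
  u_mul_v : u * v = e
  v_mul_u : v * u = f

lemma mul_eq_self_of_mem_span_singleton {e x : A} (he : IsIdempotentElem e)
    (hx : x ∈ Submodule.span A {e}) : x * e = x := by
  obtain ⟨r, rfl⟩ := Submodule.mem_span_singleton.mp hx
  rw [smul_eq_mul, mul_assoc, he.eq]

lemma LinearMap.apply_span_singleton_eq_smul {M : Type*} [AddCommGroup M] [Module A M] {e : A}
    (he : IsIdempotentElem e) (g : Submodule.span A {e} →ₗ[A] M) (x : Submodule.span A {e}) :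
    g x = (x : A) • g ⟨e, Submodule.mem_span_singleton_self e⟩ := by
  rw [← map_smul]
  congr
  exact Subtype.ext (mul_eq_self_of_mem_span_singleton he x.2).symm

def RangeContainsCorners (φ : A →ₙ+* B) : Prop :=
  ∀ e f x, φ e * x = x → x * φ f = x → x ∈ Set.range φ

namespace IsIdempotentEquivalence

variable {e f u v : A}

noncomputable def linearEquiv (he : IsIdempotentElem e) (hf : IsIdempotentElem f)
    (h : IsIdempotentEquivalence e f u v) :
    Submodule.span A {e} ≃ₗ[A] Submodule.span A {f} where
  toFun x := ⟨x * u, Submodule.mem_span_singleton.mpr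
    ⟨x * u, by rw [smul_eq_mul, mul_assoc, h.u_mul_f]⟩⟩
  map_add' x y := Subtype.ext (add_mul _ _ _)
  map_smul' r x := Subtype.ext (mul_assoc _ _ _)
  invFun y := ⟨y * v, Submodule.mem_span_singleton.mpr
    ⟨y * v, by rw [smul_eq_mul, mul_assoc, h.v_mul_e]⟩⟩
  left_inv x := Subtype.ext <| by
    simp only [mul_assoc, h.u_mul_v, mul_eq_self_of_mem_span_singleton he x.2]
  right_inv y := Subtype.ext <| by
    simp only [mul_assoc, h.v_mul_u, mul_eq_self_of_mem_span_singleton hf y.2]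

lemma map (φ : A →ₙ+* B) (h : IsIdempotentEquivalence e f u v) :
    IsIdempotentEquivalence (φ e) (φ f) (φ u) (φ v) where
  e_mul_u := by rw [← map_mul, h.e_mul_u]
  u_mul_f := by rw [← map_mul, h.u_mul_f]
  f_mul_v := by rw [← map_mul, h.f_mul_v]
  v_mul_e := by rw [← map_mul, h.v_mul_e]
  u_mul_v := by rw [← map_mul, h.u_mul_v]
  v_mul_u := by rw [← map_mul, h.v_mul_u]

lemma of_map {φ : A →ₙ+* B} (hφ : Function.Injective φ)
    (h : IsIdempotentEquivalence (φ e) (φ f) (φ u) (φ v)) : IsIdempotentEquivalence e f u v where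
  e_mul_u := hφ <| by rw [map_mul, h.e_mul_u]
  u_mul_f := hφ <| by rw [map_mul, h.u_mul_f]
  f_mul_v := hφ <| by rw [map_mul, h.f_mul_v]
  v_mul_e := hφ <| by rw [map_mul, h.v_mul_e]
  u_mul_v := hφ <| by rw [map_mul, h.u_mul_v]
  v_mul_u := hφ <| by rw [map_mul, h.v_mul_u]

end IsIdempotentEquivalence

lemma nonempty_linearEquiv_span_singleton_iff {e f : A} (he : IsIdempotentElem e)
    (hf : IsIdempotentElem f) :
    Nonempty (Submodule.span A {e} ≃ₗ[A] Submodule.span A {f}) ↔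
      ∃ u v, IsIdempotentEquivalence e f u v := by
  constructor
  · rintro ⟨φ⟩
    set e' : Submodule.span A {e} := ⟨e, Submodule.mem_span_singleton_self e⟩
    set f' : Submodule.span A {f} := ⟨f, Submodule.mem_span_singleton_self f⟩
    have hφ := congrArg Subtype.val (φ.toLinearMap.apply_span_singleton_eq_smul he e')
    have hφ' := congrArg Subtype.val (φ.symm.toLinearMap.apply_span_singleton_eq_smul hf f')
    have hφφ := congrArg Subtype.val (φ.symm.toLinearMap.apply_span_singleton_eq_smul hf (φ e'))
    have hφφ' := congrArg Subtype.val (φ.toLinearMap.apply_span_singleton_eq_smul he (φ.symm f'))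
    simp only [LinearEquiv.coe_coe, LinearEquiv.symm_apply_apply, LinearEquiv.apply_symm_apply,
      SetLike.val_smul, smul_eq_mul] at hφ hφ' hφφ hφφ'
    exact ⟨φ e', φ.symm f', ⟨hφ.symm, mul_eq_self_of_mem_span_singleton hf (φ e').2, hφ'.symm,
      mul_eq_self_of_mem_span_singleton he (φ.symm f').2, hφφ.symm, hφφ'.symm⟩⟩
  · rintro ⟨u, v, h⟩
    exact ⟨h.linearEquiv he hf⟩

lemma exists_isIdempotentEquivalence_map_iff {φ : A →ₙ+* B} (hφ : Function.Injective φ)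
    (hcorner : RangeContainsCorners φ) {e f : A} :
    (∃ U V, IsIdempotentEquivalence (φ e) (φ f) U V) ↔ ∃ u v, IsIdempotentEquivalence e f u v := by
  constructor
  · rintro ⟨U, V, h⟩
    obtain ⟨u, rfl⟩ := hcorner e f U h.e_mul_u h.u_mul_f
    obtain ⟨v, rfl⟩ := hcorner f e V h.f_mul_v h.v_mul_e
    exact ⟨u, v, h.of_map hφ⟩
  · rintro ⟨u, v, h⟩
    exact ⟨φ u, φ v, h.map φ⟩

lemma RangeContainsCorners.mem_range_of_map_eq_add {φ : A →ₙ+* B}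
    (hcorner : RangeContainsCorners φ) {e : A} {p q : B}
    (hp : IsIdempotentElem p) (hpq : p * q = 0) (hqp : q * p = 0) (h : φ e = p + q) :
    p ∈ Set.range φ :=
  hcorner e e p (by rw [h, add_mul, hp.eq, hqp, add_zero])
    (by rw [h, mul_add, hp.eq, hpq, add_zero])

lemma IsPrimitiveIdempotent.map {φ : A →ₙ+* B} (hφ : Function.Injective φ)
    (hcorner : RangeContainsCorners φ) {e : A}
    (he : IsPrimitiveIdempotent e) : IsPrimitiveIdempotent (φ e) := by
  refine ⟨he.1.map φ, (map_ne_zero_iff φ hφ).2 he.2.1, fun p q hp hq hpq hqp hsum => ?_⟩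
  obtain ⟨p, rfl⟩ := hcorner.mem_range_of_map_eq_add hp hpq hqp hsum
  obtain ⟨q, rfl⟩ := hcorner.mem_range_of_map_eq_add hq hqp hpq (hsum.trans (add_comm _ _))
  have hp' : IsIdempotentElem p := hφ <| by rw [map_mul]; exact hp
  have hq' : IsIdempotentElem q := hφ <| by rw [map_mul]; exact hq
  have hpq' : p * q = 0 := hφ <| by rw [map_mul, map_zero]; exact hpq
  have hqp' : q * p = 0 := hφ <| by rw [map_mul, map_zero]; exact hqp
  rcases he.2.2 p q hp' hq' hpq' hqp' (hφ <| by rw [map_add]; exact hsum) with rfl | rfl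
  · exact .inl (map_zero φ)
  · exact .inr (map_zero φ)

end RingIdempotents

lemma CategoryTheory.Skeletal.eq_of_hom_of_hom {C : Type*} [Category C] (hskel : Skeletal C)
    (hEI : ∀ (c : C) (f : c ⟶ c), IsIso f) {a b : C} (f : a ⟶ b) (g : b ⟶ a) : a = b := by
  have := hEI a (f ≫ g)
  have := hEI b (g ≫ f)
  have : Mono f := mono_of_mono f g
  have : IsSplitEpi f := IsSplitEpi.mk' ⟨inv (g ≫ f) ≫ g, by simp⟩
  have : IsIso f := isIso_of_mono_of_isSplitEpi f
  exact hskel ⟨asIso f⟩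

instance (a : D) : Fintype (End a) := inferInstanceAs (Fintype (a ⟶ a))

lemma delta_mul_delta_apply (p q m : Mor D) :
    (delta p * delta q) m = if pcomp p q = some m then 1 else 0 := by
  rw [mul_def, Finset.sum_eq_single p, Finset.sum_eq_single q] <;> simp +contextual [delta]

lemma delta_mul_delta_end {a : D} (g h : End a) :
    delta (⟨a, a, g⟩ : Mor D) * delta ⟨a, a, h⟩ = delta ⟨a, a, g * h⟩ := by
  funext m
  rw [delta_mul_delta_apply]
  simp [delta, pcomp, End.mul_def, eq_comm]

noncomputable def endDelta (a : D) : End a →ₙ* CatAlg D where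
  toFun g := delta ⟨a, a, g⟩
  map_mul' g h := (delta_mul_delta_end g h).symm

lemma liftMagma_endDelta (a : D) (x : MonoidAlgebra ℂ (End a)) :
    MonoidAlgebra.liftMagma ℂ (endDelta a) x = endEmbed a x := by
  simp [MonoidAlgebra.liftMagma_apply_apply, endEmbed, Finsupp.sum_fintype, endDelta]

noncomputable def endEmbedHom (a : D) : MonoidAlgebra ℂ (End a) →ₙ+* CatAlg D where
  toFun := endEmbed a
  map_mul' x y := by simp only [← liftMagma_endDelta, map_mul]
  map_zero' := by simp only [← liftMagma_endDelta, map_zero]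
  map_add' x y := by simp only [← liftMagma_endDelta, map_add]

lemma endEmbedHom_apply (a : D) (x : MonoidAlgebra ℂ (End a)) : endEmbedHom a x = endEmbed a x :=
  rfl

lemma endEmbed_one (a : D) : endEmbed a 1 = delta (idMor a) := by
  rw [← liftMagma_endDelta, MonoidAlgebra.one_def]
  simp [endDelta, idMor]

lemma endEmbed_apply (a : D) (x : MonoidAlgebra ℂ (End a)) (m : Mor D) :
    endEmbed a x m = ∑ g : End a, x.coeff g * delta ⟨a, a, g⟩ m :=
  Finset.sum_apply (M := fun _ : Mor D => ℂ) m _ _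

lemma endEmbed_apply_self (a : D) (x : MonoidAlgebra ℂ (End a)) (g : End a) :
    endEmbed a x ⟨a, a, g⟩ = x.coeff g := by
  simp [endEmbed_apply, delta]

lemma endEmbed_injective (a : D) : Function.Injective (endEmbed (D := D) a) := fun x y hxy =>
  MonoidAlgebra.ext <| Finsupp.ext fun g => by
    simpa only [endEmbed_apply_self] using congrFun hxy ⟨a, a, g⟩

def SupportedOnHom (x : CatAlg D) (a b : D) : Prop :=
  ∀ m : Mor D, x m ≠ 0 → m.1 = a ∧ m.2.1 = b

lemma supportedOnHom_endEmbed (a : D) (x : MonoidAlgebra ℂ (End a)) :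
    SupportedOnHom (endEmbed a x) a a := by
  intro m hm
  rw [endEmbed_apply] at hm
  obtain ⟨g, -, hg⟩ := Finset.exists_ne_zero_of_sum_ne_zero hm
  obtain rfl : m = ⟨a, a, g⟩ := by
    by_contra h
    simp [delta, h] at hg
  exact ⟨rfl, rfl⟩

lemma SupportedOnHom.apply_eq_zero {x : CatAlg D} {a b : D} (hx : SupportedOnHom x a b)
    {m : Mor D} (hm : ¬(m.1 = a ∧ m.2.1 = b)) : x m = 0 :=
  not_not.mp (mt (hx m) hm)

lemma endpoints_eq_of_pcomp_eq_some {p q m : Mor D} (h : pcomp p q = some m) :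
    q.2.1 = p.1 ∧ m.1 = q.1 ∧ m.2.1 = p.2.1 := by
  unfold pcomp at h
  split_ifs at h with hc
  cases h
  exact ⟨hc, rfl, rfl⟩

lemma exists_of_mul_apply_ne_zero {x y : CatAlg D} {m : Mor D} (h : (x * y) m ≠ 0) :
    ∃ p q, pcomp p q = some m ∧ x p ≠ 0 ∧ y q ≠ 0 := by
  rw [mul_def] at h
  obtain ⟨p, -, hp⟩ := Finset.exists_ne_zero_of_sum_ne_zero h
  obtain ⟨q, -, hq⟩ := Finset.exists_ne_zero_of_sum_ne_zero hp
  by_cases hpq : pcomp p q = some m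
  · rw [if_pos hpq] at hq
    exact ⟨p, q, hpq, left_ne_zero_of_mul hq, right_ne_zero_of_mul hq⟩
  · exact absurd (if_neg hpq) hq

lemma supportedOnHom_of_mul_eq {x y z : CatAlg D} {a b : D} (hy : SupportedOnHom y b b)
    (hz : SupportedOnHom z a a) (hyx : y * x = x) (hxz : x * z = x) : SupportedOnHom x a b := by
  intro m hm
  obtain ⟨p, _, hpm, hp, -⟩ := exists_of_mul_apply_ne_zero (hyx ▸ hm)
  obtain ⟨_, q, hqm, -, hq⟩ := exists_of_mul_apply_ne_zero (hxz ▸ hm)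
  exact ⟨(endpoints_eq_of_pcomp_eq_some hqm).2.1.trans (hz q hq).1,
    (endpoints_eq_of_pcomp_eq_some hpm).2.2.trans (hy p hp).2⟩

lemma SupportedOnHom.mul_eq_zero {x y : CatAlg D} {a b c d : D} (hx : SupportedOnHom x c d)
    (hy : SupportedOnHom y a b) (hbc : b ≠ c) : x * y = 0 := by
  funext m
  by_contra h
  obtain ⟨p, q, hpq, hp, hq⟩ := exists_of_mul_apply_ne_zero h
  exact hbc ((hy q hq).2.symm.trans ((endpoints_eq_of_pcomp_eq_some hpq).1.trans (hx p hp).1))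

lemma SupportedOnHom.nonempty_hom {x : CatAlg D} {a b : D} (hx : SupportedOnHom x a b)
    (h : x ≠ 0) : Nonempty (a ⟶ b) := by
  obtain ⟨⟨c, d, g⟩, hm⟩ := Function.ne_iff.mp h
  obtain ⟨rfl, rfl⟩ := hx _ hm
  exact ⟨g⟩

lemma SupportedOnHom.mem_range_endEmbed {x : CatAlg D} {a : D} (hx : SupportedOnHom x a a) :
    x ∈ Set.range (endEmbed a) := by
  refine ⟨.ofCoeff (Finsupp.equivFunOnFinite.symm fun g => x ⟨a, a, g⟩), funext fun m => ?_⟩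
  by_cases hm : m.1 = a ∧ m.2.1 = a
  · obtain ⟨c, d, g⟩ := m
    obtain ⟨rfl, rfl⟩ : c = a ∧ d = a := hm
    simp [endEmbed_apply_self]
  · rw [(supportedOnHom_endEmbed a _).apply_eq_zero hm, hx.apply_eq_zero hm]

lemma endEmbed_ne_zero {a : D} {x : MonoidAlgebra ℂ (End a)} (hx : x ≠ 0) : endEmbed a x ≠ 0 :=
  (map_ne_zero_iff (endEmbedHom a) (endEmbed_injective a)).2 hx

lemma IsIdempotentElem.endEmbed {a : D} {x : MonoidAlgebra ℂ (End a)} (hx : IsIdempotentElem x) :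
    IsIdempotentElem (endEmbed a x) :=
  hx.map (endEmbedHom a)

lemma rangeContainsCorners_endEmbedHom (a : D) : RangeContainsCorners (endEmbedHom (D := D) a) :=
  fun e f _ he hf => (supportedOnHom_of_mul_eq (supportedOnHom_endEmbed a e)
    (supportedOnHom_endEmbed a f) he hf).mem_range_endEmbed

lemma endEmbed_mul_endEmbed_of_ne {a b : D} (hab : a ≠ b) (x : MonoidAlgebra ℂ (End a))
    (y : MonoidAlgebra ℂ (End b)) : endEmbed a x * endEmbed b y = 0 :=
  (supportedOnHom_endEmbed a x).mul_eq_zero (supportedOnHom_endEmbed b y) (Ne.symm hab)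

lemma eq_of_isIdempotentEquivalence_endEmbed (hskel : Skeletal D)
    (hEI : ∀ (c : D) (f : c ⟶ c), IsIso f) {a b : D} {e : MonoidAlgebra ℂ (End a)}
    {f : MonoidAlgebra ℂ (End b)} {U V : CatAlg D} (he : e ≠ 0)
    (h : IsIdempotentEquivalence (endEmbed a e) (endEmbed b f) U V) : a = b := by
  have hUV : U * V ≠ 0 := by
    rw [h.u_mul_v]
    exact endEmbed_ne_zero he
  have hU := supportedOnHom_of_mul_eq (supportedOnHom_endEmbed a e) (supportedOnHom_endEmbed b f)
    h.e_mul_u h.u_mul_f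
  have hV := supportedOnHom_of_mul_eq (supportedOnHom_endEmbed b f) (supportedOnHom_endEmbed a e)
    h.f_mul_v h.v_mul_e
  obtain ⟨g⟩ := hU.nonempty_hom (left_ne_zero_of_mul hUV)
  obtain ⟨g'⟩ := hV.nonempty_hom (right_ne_zero_of_mul hUV)
  exact hskel.eq_of_hom_of_hom hEI g' g

lemma nonempty_linearEquiv_span_endEmbed_iff {a : D} {e f : MonoidAlgebra ℂ (End a)}
    (he : IsIdempotentElem e) (hf : IsIdempotentElem f) :
    Nonempty (Submodule.span (CatAlg D) {endEmbed a e} ≃ₗ[CatAlg D]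
        Submodule.span (CatAlg D) {endEmbed a f}) ↔
      Nonempty (Submodule.span (MonoidAlgebra ℂ (End a)) {e} ≃ₗ[MonoidAlgebra ℂ (End a)]
        Submodule.span (MonoidAlgebra ℂ (End a)) {f}) := by
  rw [nonempty_linearEquiv_span_singleton_iff he.endEmbed hf.endEmbed,
    nonempty_linearEquiv_span_singleton_iff he hf]
  exact exists_isIdempotentEquivalence_map_iff (endEmbed_injective a)
    (rangeContainsCorners_endEmbedHom a)

lemma sum_unionIdem {E : ∀ a : D, Finset (MonoidAlgebra ℂ (End a))}
    (hE : ∀ a : D, IsCompleteOrthogonalPrimitiveSet (E a)) : ∑ x ∈ unionIdem E, x = 1 := by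
  classical
  have hdisj : Set.PairwiseDisjoint (↑(Finset.univ : Finset D))
      (fun a => (E a).image (endEmbed a)) := by
    intro a _ b _ hab
    refine Finset.disjoint_left.mpr fun x hxa hxb => ?_
    obtain ⟨e, he, rfl⟩ := Finset.mem_image.mp hxa
    obtain ⟨f, hf, hfe⟩ := Finset.mem_image.mp hxb
    refine endEmbed_ne_zero ((hE a).1 e he).2.1 ?_
    calc endEmbed a e = endEmbed a e * endEmbed b f := by rw [hfe, ((hE a).1 e he).1.endEmbed.eq]
      _ = 0 := endEmbed_mul_endEmbed_of_ne hab e f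
  rw [unionIdem, Finset.sum_biUnion hdisj]
  calc ∑ a, ∑ x ∈ (E a).image (endEmbed a), x
      = ∑ a, endEmbed a (∑ e ∈ E a, e) := by
        refine Finset.sum_congr rfl fun a _ => ?_
        rw [Finset.sum_image fun x _ y _ h => endEmbed_injective a h, ← endEmbedHom_apply, map_sum]
        rfl
    _ = ∑ a, delta (idMor a) := by simp only [fun a => (hE a).2.2, endEmbed_one]
    _ = 1 := funext fun m => (Finset.sum_apply m _ _).trans (one_def m).symm

lemma mem_unionIdem {E : ∀ a : D, Finset (MonoidAlgebra ℂ (End a))} {x : CatAlg D} :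
    x ∈ unionIdem E ↔ ∃ a, ∃ e ∈ E a, endEmbed a e = x := by
  simp [unionIdem]

lemma isCompleteOrthogonalPrimitiveSet_unionIdem {E : ∀ a : D, Finset (MonoidAlgebra ℂ (End a))}
    (hE : ∀ a : D, IsCompleteOrthogonalPrimitiveSet (E a)) :
    IsCompleteOrthogonalPrimitiveSet (unionIdem E) := by
  refine ⟨fun x hx => ?_, fun x hx y hy hxy => ?_, sum_unionIdem hE⟩
  · obtain ⟨a, e, he, rfl⟩ := mem_unionIdem.mp hx
    exact ((hE a).1 e he).map (endEmbed_injective a) (rangeContainsCorners_endEmbedHom a)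
  · obtain ⟨a, e, he, rfl⟩ := mem_unionIdem.mp hx
    obtain ⟨b, f, hf, rfl⟩ := mem_unionIdem.mp hy
    obtain rfl | hab := eq_or_ne a b
    · obtain ⟨hef, hfe⟩ := (hE a).2.1 e he f hf (by rintro rfl; exact hxy rfl)
      simp only [← endEmbedHom_apply, ← map_mul, hef, hfe, map_zero, and_self]
    · exact ⟨endEmbed_mul_endEmbed_of_ne hab e f, endEmbed_mul_endEmbed_of_ne hab.symm f e⟩

/-- Let `D` be a finite skeletal EI-category, and for each object `a` let `E a` be a
complete set of primitive orthogonal idempotents of the group algebra `ℂ D(a,a)`.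
Then (1) the union of the `E a`, viewed inside the category algebra `ℂ D` (via the
canonical embeddings of the `ℂ D(a,a)`), is a complete set of primitive orthogonal
idempotents of `ℂ D`; and (2) for `e ∈ E a` and `f ∈ E b`, the left ideals
`ℂD⋅e` and `ℂD⋅f` are isomorphic as left `ℂD`-modules if and only if `a = b` and
`ℂ D(a,a)⋅e ≅ ℂ D(a,a)⋅f` as `ℂ D(a,a)`-modules. -/
theorem unionIdem_isCompleteOrthogonalPrimitiveSet_and_iso_iff
    (hskel : Skeletal D) (hEI : ∀ (a : D) (f : a ⟶ a), IsIso f)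
    (E : ∀ a : D, Finset (MonoidAlgebra ℂ (CategoryTheory.End a)))
    (hE : ∀ a : D, IsCompleteOrthogonalPrimitiveSet (E a)) :
    IsCompleteOrthogonalPrimitiveSet (unionIdem E) ∧
    ∀ (a b : D) (e : MonoidAlgebra ℂ (CategoryTheory.End a))
      (f : MonoidAlgebra ℂ (CategoryTheory.End b)), e ∈ E a → f ∈ E b →
      (Nonempty ((Submodule.span (CatAlg D) {endEmbed a e}) ≃ₗ[CatAlg D]
          (Submodule.span (CatAlg D) {endEmbed b f})) ↔
        ∃ h : a = b,
          Nonempty ((Submodule.span (MonoidAlgebra ℂ (CategoryTheory.End b)) {h ▸ e})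
            ≃ₗ[MonoidAlgebra ℂ (CategoryTheory.End b)]
              (Submodule.span (MonoidAlgebra ℂ (CategoryTheory.End b)) {f}))) := by
  refine ⟨isCompleteOrthogonalPrimitiveSet_unionIdem hE, fun a b e f he hf => ?_⟩
  obtain ⟨he_idem, he_ne, -⟩ := (hE a).1 e he
  have hf_idem := ((hE b).1 f hf).1
  constructor
  · intro hφ
    obtain rfl : a = b := by
      obtain ⟨U, V, h⟩ := (nonempty_linearEquiv_span_singleton_iff
        he_idem.endEmbed hf_idem.endEmbed).mp hφ
      exact eq_of_isIdempotentEquivalence_endEmbed hskel hEI he_ne h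
    exact ⟨rfl, (nonempty_linearEquiv_span_endEmbed_iff he_idem hf_idem).mp hφ⟩
  · rintro ⟨rfl, hψ⟩
    exact (nonempty_linearEquiv_span_endEmbed_iff he_idem hf_idem).mpr hψ
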